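/- arXiv:2601.07336 — 2 statements merged into one kernel-verified Lean document; each statement's English description precedes it below -/
import Mathlib

section
/- For all integers n, m ≥ 1, f(n+m−1) ≥ f(n)·f(m), where f(k) is the maximum size of a Condorcet domain on k alternatives. -/
/-- The majority relation of a profile `P` of `k` voters: `a` beats `b` if more voters
rank `a` above `b` than rank `b` above `a`. -/
def Maj {α : Type*} {k : ℕ} (P : Fin k → α → α → Prop) (a b : α) : Prop :=
  Nat.card {i : Fin k // P i a b} > Nat.card {i : Fin k // P i b a}

/-- `D` is a Condorcet domain: a set of linear orders (strict total orders) on the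
alternatives such that every profile with an odd number of voters drawn from `D`
has a transitive majority relation. -/
def IsCondorcetDomain {α : Type*} (D : Set (α → α → Prop)) : Prop :=
  (∀ r ∈ D, IsStrictTotalOrder α r) ∧
  ∀ (k : ℕ), Odd k → ∀ P : Fin k → α → α → Prop,
    (∀ i, P i ∈ D) → Transitive (Maj P)

/-- `maxCD n` is the maximum size of a Condorcet domain on `n` alternatives. -/
noncomputable def maxCD (n : ℕ) : ℕ :=
  sSup {s : ℕ | ∃ D : Set (Fin n → Fin n → Prop), IsCondorcetDomain D ∧ s = Nat.card D}

/-!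
Fishburn's concatenation replaces one alternative `a₀` of the first set of alternatives by the
whole second set, placed as a block where `a₀` was. Every alternative of the block is compared
with the others exactly as `a₀` was, so the majority relation of a profile of concatenated
orders is the concatenation of the two majority relations, and these are transitive.
Concatenating every order of a Condorcet domain on `n` alternatives with every order of one on
`m` alternatives therefore gives a Condorcet domain on `n - 1 + m` alternatives; an
irreflexive order is recovered from its concatenations, so no two pairs give the same order.
-/

variable {α β : Type*}

lemma maj_asymm {k : ℕ} {P : Fin k → α → α → Prop} {a b : α} (h : Maj P a b) : ¬ Maj P b a :=
  lt_asymm h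

lemma isCondorcetDomain_empty : IsCondorcetDomain (∅ : Set (α → α → Prop)) :=
  ⟨fun _ h => h.elim, fun _ hk _ hP => (hP ⟨0, hk.pos⟩).elim⟩

section Relabel

variable {D : Set (α → α → Prop)}

lemma preimage_equiv_injective (e : β ≃ α) :
    Function.Injective (e ⁻¹'o · : (α → α → Prop) → β → β → Prop) := by
  intro r r' h
  funext a a'
  simpa [Order.Preimage] using congrFun₂ h (e.symm a) (e.symm a')

lemma IsCondorcetDomain.image_preimage_equiv (e : β ≃ α) (hD : IsCondorcetDomain D) :
    IsCondorcetDomain ((e ⁻¹'o ·) '' D) := by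
  refine ⟨?_, fun k hk P hP => ?_⟩
  · rintro _ ⟨r, hr, rfl⟩
    have := hD.1 r hr
    exact (RelIso.preimage e r).toRelEmbedding.isStrictTotalOrder
  · choose p hp hpP using hP
    obtain rfl : P = fun i => e ⁻¹'o p i := funext fun i => (hpP i).symm
    exact fun x y z hxy hyz => hD.2 k hk p hp hxy hyz

end Relabel

section MaxCD

lemma bddAbove_card_isCondorcetDomain (n : ℕ) :
    BddAbove {s | ∃ D : Set (Fin n → Fin n → Prop), IsCondorcetDomain D ∧ s = Nat.card D} := by
  refine ⟨Nat.card (Fin n → Fin n → Prop), ?_⟩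
  rintro _ ⟨D, -, rfl⟩
  exact Nat.card_le_card_of_injective _ Subtype.val_injective

lemma exists_isCondorcetDomain_card_eq_maxCD (n : ℕ) :
    ∃ D : Set (Fin n → Fin n → Prop), IsCondorcetDomain D ∧ Nat.card D = maxCD n := by
  obtain ⟨D, hD, h⟩ :=
    Nat.sSup_mem (by exact ⟨0, ∅, isCondorcetDomain_empty, Nat.card_of_isEmpty.symm⟩)
      (bddAbove_card_isCondorcetDomain n)
  exact ⟨D, hD, h.symm⟩

lemma IsCondorcetDomain.card_le_maxCD [Fintype α] {D : Set (α → α → Prop)}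
    (hD : IsCondorcetDomain D) : Nat.card D ≤ maxCD (Fintype.card α) := by
  let e := (Fintype.equivFin α).symm
  refine le_csSup (bddAbove_card_isCondorcetDomain _) ⟨_, hD.image_preimage_equiv e, ?_⟩
  exact (Nat.card_image_of_injective (preimage_equiv_injective e) D).symm

end MaxCD

section Glue

variable (a₀ : α)

def glueRel (r : α → α → Prop) (s : β → β → Prop) :
    {a // a ≠ a₀} ⊕ β → {a // a ≠ a₀} ⊕ β → Prop
  | .inl a, .inl a' => r a a'
  | .inl a, .inr _ => r a a₀
  | .inr _, .inl a' => r a₀ a'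
  | .inr b, .inr b' => s b b'

def glueDomain (D₁ : Set (α → α → Prop)) (D₂ : Set (β → β → Prop)) :
    Set ({a // a ≠ a₀} ⊕ β → {a // a ≠ a₀} ⊕ β → Prop) :=
  (fun p => glueRel a₀ p.1 p.2) '' (D₁ ×ˢ D₂)

variable {a₀} {r r' : α → α → Prop} {s s' : β → β → Prop}

lemma glueRel_trans (hr : Transitive r) (hr_asymm : ∀ a b, r a b → ¬ r b a)
    (hs : Transitive s) : Transitive (glueRel a₀ r s) := by
  rintro (_ | _) (_ | _) (_ | _) h h'
  exacts [hr h h', hr h h', hr h h', h, hr h h', (hr_asymm _ _ h h').elim, h', hs h h']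

lemma isStrictTotalOrder_glueRel [IsStrictTotalOrder α r] [IsStrictTotalOrder β s] :
    IsStrictTotalOrder _ (glueRel a₀ r s) where
  trichotomous
    | .inl _, .inl _, h, h' => congrArg _ (Subtype.ext (Std.Trichotomous.trichotomous _ _ h h'))
    | .inl a, .inr _, h, h' => (a.2 (Std.Trichotomous.trichotomous _ _ h h')).elim
    | .inr _, .inl a, h, h' => (a.2 (Std.Trichotomous.trichotomous _ _ h' h)).elim
    | .inr _, .inr _, h, h' => congrArg _ (Std.Trichotomous.trichotomous _ _ h h')
  irrefl
    | .inl a => irrefl (r := r) a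
    | .inr b => irrefl (r := s) b
  trans _ _ _ h h' := glueRel_trans (fun _ _ _ => _root_.trans) (fun _ _ => asymm)
    (fun _ _ _ => _root_.trans) h h'

lemma maj_glueRel {k : ℕ} (σ : Fin k → α → α → Prop) (τ : Fin k → β → β → Prop) :
    Maj (fun i => glueRel a₀ (σ i) (τ i)) = glueRel a₀ (Maj σ) (Maj τ) := by
  funext x y
  cases x <;> cases y <;> rfl

lemma glueRel_injective [Nonempty β] [Std.Irrefl r] [Std.Irrefl r']
    (h : glueRel a₀ r s = glueRel a₀ r' s') : r = r' ∧ s = s' := by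
  obtain ⟨b⟩ := ‹Nonempty β›
  have key (x y) : glueRel a₀ r s x y ↔ glueRel a₀ r' s' x y := by rw [h]
  refine ⟨funext₂ fun a a' => propext ?_, funext₂ fun b b' => propext (key (.inr b) (.inr b'))⟩
  by_cases ha : a = a₀ <;> by_cases ha' : a' = a₀
  · subst ha ha'
    exact iff_of_false (irrefl _) (irrefl _)
  · subst ha
    exact key (.inr b) (.inl ⟨a', ha'⟩)
  · subst ha'
    exact key (.inl ⟨a, ha⟩) (.inr b)
  · exact key (.inl ⟨a, ha⟩) (.inl ⟨a', ha'⟩)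

variable {D₁ : Set (α → α → Prop)} {D₂ : Set (β → β → Prop)}

lemma IsCondorcetDomain.glueDomain (hD₁ : IsCondorcetDomain D₁) (hD₂ : IsCondorcetDomain D₂) :
    IsCondorcetDomain (glueDomain a₀ D₁ D₂) := by
  refine ⟨?_, fun k hk P hP => ?_⟩
  · rintro _ ⟨⟨r, s⟩, ⟨hr, hs⟩, rfl⟩
    have := hD₁.1 r hr
    have := hD₂.1 s hs
    exact isStrictTotalOrder_glueRel
  · choose p hp hpP using hP
    obtain rfl : P = fun i => glueRel a₀ (p i).1 (p i).2 := funext fun i => (hpP i).symm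
    rw [maj_glueRel]
    exact glueRel_trans (hD₁.2 k hk _ fun i => (hp i).1) (fun _ _ => maj_asymm)
      (hD₂.2 k hk _ fun i => (hp i).2)

lemma card_glueDomain [Nonempty β] (hD₁ : ∀ r ∈ D₁, Std.Irrefl r) :
    Nat.card (glueDomain a₀ D₁ D₂) = Nat.card D₁ * Nat.card D₂ := by
  rw [glueDomain, Nat.card_image_of_injOn, Nat.card_congr (Equiv.Set.prod D₁ D₂), Nat.card_prod]
  rintro ⟨r, s⟩ ⟨hr, -⟩ ⟨r', s'⟩ ⟨hr', -⟩ h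
  have := hD₁ r hr
  have := hD₁ r' hr'
  obtain ⟨rfl, rfl⟩ := glueRel_injective h
  rfl

end Glue

/-- Fishburn's superadditivity: `f(n+m-1) ≥ f(n)·f(m)`. -/
theorem maxCD_fishburn_superadditive (n m : ℕ) (hn : 1 ≤ n) (hm : 1 ≤ m) :
    maxCD n * maxCD m ≤ maxCD (n + m - 1) := by
  obtain ⟨D₁, hD₁, hcard₁⟩ := exists_isCondorcetDomain_card_eq_maxCD n
  obtain ⟨D₂, hD₂, hcard₂⟩ := exists_isCondorcetDomain_card_eq_maxCD m
  let a₀ : Fin n := ⟨0, hn⟩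
  have : Nonempty (Fin m) := ⟨⟨0, hm⟩⟩
  have hcard : Fintype.card ({a // a ≠ a₀} ⊕ Fin m) = n + m - 1 := by
    simp only [ne_eq, Fintype.card_sum, Fintype.card_subtype_compl, Fintype.card_fin,
      Fintype.card_unique]
    omega
  rw [← hcard₁, ← hcard₂, ← hcard, ← card_glueDomain fun r hr => (hD₁.1 r hr).toIrrefl]
  exact (hD₁.glueDomain hD₂).card_le_maxCD
end

section
/- Let {a,b,c} be a 3-element set. A set D of linear orders on {a,b,c} is a Condorcet domain if and only if there exist x ∈ {a,b,c} and a position p ∈ {top, middle, bottom} such that no order in D places x in position p. -/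
/-- `rankIn r x` is the position (0 = top, 1 = middle, 2 = bottom on three
alternatives) of `x` in the linear order `r`. -/
noncomputable def rankIn {α : Type*} (r : α → α → Prop) (x : α) : ℕ :=
  Nat.card {y : α // r y x}

/-!
Read a linear order `r` through its rank permutation `x ↦ rankIn r x`. The majority relation of an
odd profile of linear orders is complete, asymmetric, and monotone in the set of voters supporting
a pair.

If `x` never takes position `p`, a majority cycle `a > b > c > a` is impossible: rotating it so that
`x = a`, every voter supporting one of its three pairs also supports the reverse of another one
(if `a` is never on top, say, whoever puts `a` over `b` puts `c` over `b`).

Conversely, if every alternative takes every position, the rank permutations of the orders in `D`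
contain a Latin square, and a three-voter profile forming a Latin square has a majority cycle
(Condorcet's paradox).
-/

open Finset

section Rank

variable {α : Type*} {r : α → α → Prop}

theorem rankIn_eq_ncard (r : α → α → Prop) (x : α) : rankIn r x = {y | r y x}.ncard :=
  Nat.card_coe_set_eq _

variable [Finite α]

theorem rankIn_lt_rankIn (hr : IsStrictTotalOrder α r) {a b : α} (hab : r a b) :
    rankIn r a < rankIn r b := by
  rw [rankIn_eq_ncard, rankIn_eq_ncard]
  exact Set.ncard_lt_ncard ⟨fun y hy => hr.trans _ _ _ hy hab, fun h => hr.irrefl a (h hab)⟩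

theorem rankIn_lt_rankIn_iff (hr : IsStrictTotalOrder α r) {a b : α} :
    rankIn r a < rankIn r b ↔ r a b := by
  refine ⟨fun h => ?_, rankIn_lt_rankIn hr⟩
  have := hr
  rcases trichotomous_of r a b with hab | rfl | hba
  · exact hab
  · exact absurd h (lt_irrefl _)
  · exact absurd (rankIn_lt_rankIn hr hba) h.not_gt

theorem rankIn_injective (hr : IsStrictTotalOrder α r) : Function.Injective (rankIn r) := by
  intro a b h
  have := hr
  rcases trichotomous_of r a b with hab | rfl | hba
  · exact absurd h (rankIn_lt_rankIn hr hab).ne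
  · rfl
  · exact absurd h (rankIn_lt_rankIn hr hba).ne'

theorem rankIn_lt_card (hr : IsStrictTotalOrder α r) (x : α) : rankIn r x < Nat.card α := by
  rw [rankIn_eq_ncard]
  exact Set.ncard_lt_card fun h => hr.irrefl x (h.symm.subset (Set.mem_univ x))

theorem exists_perm_val_eq_rankIn {n : ℕ} {r : Fin n → Fin n → Prop}
    (hr : IsStrictTotalOrder (Fin n) r) : ∃ σ : Equiv.Perm (Fin n), ∀ x, (σ x : ℕ) = rankIn r x :=
  ⟨Equiv.ofBijective (fun x => ⟨rankIn r x, by simpa using rankIn_lt_card hr x⟩)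
    (Finite.injective_iff_bijective.mp fun _ _ h => rankIn_injective hr (Fin.mk.inj h)),
    fun _ => rfl⟩

end Rank

section Majority

variable {α : Type*} {k : ℕ} {P : Fin k → α → α → Prop}

theorem card_add_card_swap_of_ne (hP : ∀ i, IsStrictTotalOrder α (P i)) {a b : α} (hab : a ≠ b) :
    Nat.card {i // P i a b} + Nat.card {i // P i b a} = k := by
  have hcompl : {i | P i b a} = {i | P i a b}ᶜ := by
    ext i
    have := hP i
    rcases trichotomous_of (P i) a b with h | rfl | h
    · simpa [h] using fun h' => (hP i).irrefl a ((hP i).trans _ _ _ h h')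
    · exact absurd rfl hab
    · simpa [h] using fun h' => (hP i).irrefl a ((hP i).trans _ _ _ h' h)
  change {i | P i a b}.ncard + {i | P i b a}.ncard = k
  rw [hcompl, Set.ncard_add_ncard_compl, Nat.card_fin]

theorem maj_iff_lt_two_mul (hP : ∀ i, IsStrictTotalOrder α (P i)) (a b : α) :
    Maj P a b ↔ k < 2 * Nat.card {i // P i a b} := by
  by_cases hab : a = b
  · subst hab
    have : IsEmpty {i // P i a a} := ⟨fun i => (hP i.1).irrefl a i.2⟩
    simp [Maj, Nat.card_of_isEmpty]
  · have := card_add_card_swap_of_ne hP hab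
    unfold Maj
    omega

theorem Maj.mono (hP : ∀ i, IsStrictTotalOrder α (P i)) {a b c d : α}
    (h : ∀ i, P i a b → P i c d) (hab : Maj P a b) : Maj P c d := by
  rw [maj_iff_lt_two_mul hP] at hab ⊢
  exact hab.trans_le (Nat.mul_le_mul_left 2 (Set.ncard_le_ncard fun i => h i))

theorem Maj.ne {a b : α} (h : Maj P a b) : a ≠ b := by
  rintro rfl
  exact lt_irrefl _ h

theorem Maj.asymm {a b : α} (hab : Maj P a b) (hba : Maj P b a) : False :=
  lt_asymm hab hba

theorem maj_or_maj_of_odd (hP : ∀ i, IsStrictTotalOrder α (P i)) (hk : Odd k) {a b : α}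
    (hab : a ≠ b) : Maj P a b ∨ Maj P b a := by
  have := card_add_card_swap_of_ne hP hab
  rw [maj_iff_lt_two_mul hP, maj_iff_lt_two_mul hP]
  obtain ⟨m, rfl⟩ := hk
  omega

end Majority

section ValueRestriction

variable {k : ℕ} {P : Fin k → Fin 3 → Fin 3 → Prop}

theorem Maj.false_of_cycle_of_rankIn_ne (hP : ∀ i, IsStrictTotalOrder (Fin 3) (P i))
    {a b c : Fin 3} {p : ℕ} (hp : p < 3) (hN : ∀ i, rankIn (P i) a ≠ p)
    (hab : Maj P a b) (hbc : Maj P b c) (hca : Maj P c a) : False := by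
  have ranks : ∀ i, rankIn (P i) a < 3 ∧ rankIn (P i) b < 3 ∧ rankIn (P i) c < 3 ∧
      rankIn (P i) a ≠ rankIn (P i) b ∧ rankIn (P i) b ≠ rankIn (P i) c ∧
      rankIn (P i) c ≠ rankIn (P i) a := fun i =>
    have hlt := rankIn_lt_card (hP i)
    have hinj := rankIn_injective (hP i)
    ⟨by simpa using hlt a, by simpa using hlt b, by simpa using hlt c,
      hinj.ne hab.ne, hinj.ne hbc.ne, hinj.ne hca.ne⟩
  have hlt : ∀ i u v, P i u v ↔ rankIn (P i) u < rankIn (P i) v := fun i _ _ =>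
    (rankIn_lt_rankIn_iff (hP i)).symm
  interval_cases p
  · -- a is never on top: whoever puts a over b puts c over a, hence over b
    refine (hab.mono hP fun i h => ?_).asymm hbc
    have := ranks i; have := hN i; rw [hlt] at h ⊢; omega
  · -- a is never in the middle: whoever puts a over b puts a on top, hence over c
    refine (hab.mono hP fun i h => ?_).asymm hca
    have := ranks i; have := hN i; rw [hlt] at h ⊢; omega
  · -- a is never at the bottom: whoever puts c over a puts b under a, hence under c
    refine (hca.mono hP fun i h => ?_).asymm hbc
    have := ranks i; have := hN i; rw [hlt] at h ⊢; omega

theorem transitive_maj_of_rankIn_ne (hP : ∀ i, IsStrictTotalOrder (Fin 3) (P i)) (hk : Odd k)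
    {x p : Fin 3} (hN : ∀ i, rankIn (P i) x ≠ p) : Transitive (Maj P) := by
  intro a b c hab hbc
  have hac : a ≠ c := by
    rintro rfl
    exact hab.asymm hbc
  refine (maj_or_maj_of_odd hP hk hac).resolve_right fun hca => ?_
  have hx : ∀ x a b c : Fin 3, a ≠ b → b ≠ c → c ≠ a → x = a ∨ x = b ∨ x = c := by decide
  rcases hx x a b c hab.ne hbc.ne hca.ne with rfl | rfl | rfl
  · exact hab.false_of_cycle_of_rankIn_ne hP p.isLt hN hbc hca
  · exact hbc.false_of_cycle_of_rankIn_ne hP p.isLt hN hca hab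
  · exact hca.false_of_cycle_of_rankIn_ne hP p.isLt hN hab hbc

end ValueRestriction

/- The six orders form two Latin squares, the even and the odd permutations. If `S` missed an
even `σ` and an odd `τ`, then `τ⁻¹ * σ` would be a transposition, so `σ x = τ x` for some `x`,
and `σ`, `τ` are the only two orders putting `x` in that position. -/
set_option maxRecDepth 100000 in
theorem Equiv.Perm.exists_latinSquare_of_forall_exists_apply_eq
    (S : Finset (Equiv.Perm (Fin 3))) (hS : ∀ x p : Fin 3, ∃ σ ∈ S, σ x = p) :
    ∃ σ : Fin 3 → Equiv.Perm (Fin 3), (∀ i, σ i ∈ S) ∧ ∀ x, Function.Injective (σ · x) := by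
  revert S
  decide

set_option maxRecDepth 100000 in
theorem Equiv.Perm.exists_majority_cycle_of_latinSquare (σ : Fin 3 → Equiv.Perm (Fin 3))
    (hσ : ∀ x, Function.Injective (σ · x)) :
    ∃ a b c : Fin 3, 3 < 2 * #{i | σ i a < σ i b} ∧ 3 < 2 * #{i | σ i b < σ i c} ∧
      3 < 2 * #{i | σ i c < σ i a} := by
  revert σ
  decide

theorem not_isCondorcetDomain_of_forall_exists_rankIn_eq {D : Set (Fin 3 → Fin 3 → Prop)}
    (hD : ∀ x p : Fin 3, ∃ r ∈ D, rankIn r x = p) : ¬ IsCondorcetDomain D := by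
  classical
  rintro ⟨hlin, htrans⟩
  let S : Finset (Equiv.Perm (Fin 3)) := {σ | ∃ r ∈ D, ∀ x, (σ x : ℕ) = rankIn r x}
  have hS : ∀ x p : Fin 3, ∃ σ ∈ S, σ x = p := fun x p => by
    obtain ⟨r, hrD, hrx⟩ := hD x p
    obtain ⟨σ, hσ⟩ := exists_perm_val_eq_rankIn (hlin r hrD)
    exact ⟨σ, by simpa [S] using ⟨r, hrD, hσ⟩, Fin.ext ((hσ x).trans hrx)⟩
  obtain ⟨σ, hσS, hσ⟩ := Equiv.Perm.exists_latinSquare_of_forall_exists_apply_eq S hS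
  choose r hrD hrσ using fun i => (mem_filter.1 (hσS i)).2
  have hrel : ∀ i u v, r i u v ↔ σ i u < σ i v := fun i u v => by
    rw [← rankIn_lt_rankIn_iff (hlin _ (hrD i)), ← hrσ, ← hrσ, Fin.lt_def]
  have hmaj : ∀ u v, Maj r u v ↔ 3 < 2 * #{i | σ i u < σ i v} := fun u v => by
    simp only [maj_iff_lt_two_mul (fun i => hlin _ (hrD i)), hrel, Nat.card_eq_fintype_card,
      Fintype.card_subtype]
  obtain ⟨a, b, c, hab, hbc, hca⟩ := Equiv.Perm.exists_majority_cycle_of_latinSquare σ hσ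
  exact (htrans 3 (by decide) r hrD ((hmaj a b).2 hab) ((hmaj b c).2 hbc)).asymm ((hmaj c a).2 hca)

/-- Sen's characterization on a triple: a set of linear orders on a 3-element set is a
Condorcet domain iff some alternative never occupies some fixed position. -/
theorem isCondorcetDomain_iff_never_condition (D : Set (Fin 3 → Fin 3 → Prop))
    (hlin : ∀ r ∈ D, IsStrictTotalOrder (Fin 3) r) :
    IsCondorcetDomain D ↔
      ∃ x : Fin 3, ∃ p : Fin 3, ∀ r ∈ D, rankIn r x ≠ (p : ℕ) := by
  constructor
  · intro hD
    by_contra! hcover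
    exact not_isCondorcetDomain_of_forall_exists_rankIn_eq hcover hD
  · rintro ⟨x, p, hN⟩
    exact ⟨hlin, fun k hk P hP =>
      transitive_maj_of_rankIn_ne (fun i => hlin _ (hP i)) hk fun i => hN _ (hP i)⟩
end
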